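/- arXiv:1904.07675 — 3 statements merged into one kernel-verified Lean document; each statement's English description precedes it below -/
import Mathlib

section
/- Let q be a real number with 0 < q < 1/2 and p = 1 − q, and let C_n = (2n)!/(n!·(n+1)!) denote the n-th Catalan number. Then the series ∑_{n=0}^∞ p·(pq)^n·C_n converges and equals 1. -/
open scoped BigOperators

/-- The `n`-th Catalan number `C_n = (2n)! / (n! * (n+1)!)`, as a real number. -/
noncomputable def catalanC (n : ℕ) : ℝ :=
  (Nat.factorial (2 * n) : ℝ) / ((Nat.factorial n : ℝ) * (Nat.factorial (n + 1) : ℝ))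

/-!
For `x = pq < 1/4` the Catalan generating function `f = ∑ Cₙ xⁿ` converges, and the recurrence
`C_{n+1} = ∑_{i+j=n} C_i C_j` turns into `f = 1 + x f²`. Of the two roots `1/p` and `1/q` of
`pq f² - f + 1 = 0`, the bound `f ≤ 2 < 1/q` selects `f = 1/p`; in closed form,
`f = (1 - √(1 - 4x)) / (2x)` with `√(1 - 4pq) = p - q`.
-/

open Finset

lemma catalanC_eq_catalan (n : ℕ) : catalanC n = catalan n := by
  have hfact : ((2 * n).factorial : ℝ) = n.centralBinom * n.factorial * n.factorial := by
    have h := Nat.choose_mul_factorial_mul_factorial (show n ≤ 2 * n by omega)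
    rw [show 2 * n - n = n by omega] at h
    exact_mod_cast h.symm
  have hcentral : (n.centralBinom : ℝ) = (n + 1) * catalan n := by
    exact_mod_cast (succ_mul_catalan_eq_centralBinom n).symm
  rw [catalanC, hfact, hcentral, Nat.factorial_succ]
  push_cast
  field_simp

lemma catalan_le_four_pow (n : ℕ) : catalan n ≤ 4 ^ n :=
  (Nat.le_mul_of_pos_left _ n.succ_pos).trans
    ((succ_mul_catalan_eq_centralBinom n).trans_le (Nat.centralBinom_le_four_pow n))

section GeneratingFunction

variable {𝕜 : Type*} [NormedField 𝕜] {x : 𝕜}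

lemma summable_norm_catalan_mul_pow (hx : ‖x‖ < 1 / 4) :
    Summable fun n ↦ ‖(catalan n : 𝕜) * x ^ n‖ := by
  refine .of_nonneg_of_le (fun _ ↦ norm_nonneg _) (fun n ↦ ?_)
    (summable_geometric_of_lt_one (by positivity) (by linarith) :
      Summable fun n ↦ (4 * ‖x‖) ^ n)
  calc ‖(catalan n : 𝕜) * x ^ n‖ ≤ catalan n * ‖x‖ ^ n := by
        rw [norm_mul, norm_pow]
        gcongr
        simpa using (catalan n).norm_cast_le (α := 𝕜)
    _ ≤ (4 * ‖x‖) ^ n := by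
        rw [mul_pow]
        gcongr
        exact_mod_cast catalan_le_four_pow n

lemma tsum_catalan_mul_pow_eq_one_add [CompleteSpace 𝕜] (hx : ‖x‖ < 1 / 4) :
    ∑' n, (catalan n : 𝕜) * x ^ n = 1 + x * (∑' n, (catalan n : 𝕜) * x ^ n) ^ 2 := by
  have hs := summable_norm_catalan_mul_pow hx
  have hsucc (n : ℕ) : (catalan (n + 1) : 𝕜) * x ^ (n + 1) =
      x * ∑ ij ∈ antidiagonal n, catalan ij.1 * x ^ ij.1 * (catalan ij.2 * x ^ ij.2) := by
    rw [catalan_succ', Nat.cast_sum, sum_mul, mul_sum]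
    refine sum_congr rfl fun ij hij ↦ ?_
    rw [← mem_antidiagonal.1 hij]
    push_cast
    ring
  calc ∑' n, (catalan n : 𝕜) * x ^ n
      = catalan 0 * x ^ 0 + ∑' n, (catalan (n + 1) : 𝕜) * x ^ (n + 1) :=
        hs.of_norm.tsum_eq_zero_add
    _ = 1 + x * ∑' n, ∑ ij ∈ antidiagonal n,
          catalan ij.1 * x ^ ij.1 * (catalan ij.2 * x ^ ij.2) := by
      simp only [hsucc, tsum_mul_left, catalan_zero, Nat.cast_one, pow_zero, mul_one]
    _ = 1 + x * (∑' n, (catalan n : 𝕜) * x ^ n) ^ 2 := by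
      rw [sq, tsum_mul_tsum_eq_tsum_sum_antidiagonal_of_summable_norm hs hs]

end GeneratingFunction

lemma catalan_eq_two_mul_centralBinom_sub (n : ℕ) :
    (catalan n : ℝ) = 2 * n.centralBinom - (n + 1).centralBinom / 2 := by
  have hcat : ((n : ℝ) + 1) * catalan n = n.centralBinom := by
    exact_mod_cast succ_mul_catalan_eq_centralBinom n
  have hsucc : ((n : ℝ) + 1) * (n + 1).centralBinom = 2 * (2 * n + 1) * n.centralBinom := by
    exact_mod_cast Nat.succ_mul_centralBinom_succ n
  have hn : (n : ℝ) + 1 ≠ 0 := by positivity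
  apply mul_left_cancel₀ hn
  linear_combination hcat + hsucc / 2

-- With `Bₙ = centralBinom n`, `Cₙ = 2Bₙ - B_{n+1}/2` makes the partial sums telescope.
lemma sum_range_catalan_mul_pow_add_le_two {x : ℝ} (hx0 : 0 ≤ x) (hx : x ≤ 1 / 4) (N : ℕ) :
    ∑ n ∈ range N, (catalan n : ℝ) * x ^ n + 2 * N.centralBinom * x ^ N ≤ 2 := by
  induction N with
  | zero => simp
  | succ N ih =>
    have hstep : 2 * ((N + 1).centralBinom : ℝ) * x ^ (N + 1)
        ≤ (N + 1).centralBinom / 2 * x ^ N := by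
      rw [pow_succ]
      have := mul_le_mul_of_nonneg_left hx
        (by positivity : (0 : ℝ) ≤ (N + 1).centralBinom * x ^ N)
      linarith
    rw [sum_range_succ, catalan_eq_two_mul_centralBinom_sub]
    linarith

lemma tsum_catalan_mul_pow_le_two {x : ℝ} (hx0 : 0 ≤ x) (hx : x ≤ 1 / 4) :
    ∑' n, (catalan n : ℝ) * x ^ n ≤ 2 :=
  Real.tsum_le_of_sum_range_le (fun _ ↦ by positivity) fun N ↦ by
    have := sum_range_catalan_mul_pow_add_le_two hx0 hx N
    have : (0 : ℝ) ≤ 2 * N.centralBinom * x ^ N := by positivity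
    linarith

theorem tsum_catalan_mul_pow_eq {x : ℝ} (hx0 : 0 < x) (hx : x < 1 / 4) :
    ∑' n, (catalan n : ℝ) * x ^ n = (1 - √(1 - 4 * x)) / (2 * x) := by
  set f := ∑' n, (catalan n : ℝ) * x ^ n
  have hnorm : ‖x‖ < 1 / 4 := by rwa [Real.norm_of_nonneg hx0.le]
  have hquad : f = 1 + x * f ^ 2 := tsum_catalan_mul_pow_eq_one_add hnorm
  have hf : f ≤ 2 := tsum_catalan_mul_pow_le_two hx0.le hx.le
  -- `f ≤ 2` gives `1 - 2xf ≥ 1 - 4x > 0`, which selects the root.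
  have hsqrt : √(1 - 4 * x) = 1 - 2 * x * f := by
    rw [show 1 - 4 * x = (1 - 2 * x * f) ^ 2 by linear_combination 4 * x * hquad]
    exact Real.sqrt_sq (by nlinarith)
  rw [hsqrt]
  field_simp
  ring

/-- For `0 < q < 1/2` and `p = 1 - q`, the series `∑ p (pq)^n C_n` converges and equals `1`. -/
theorem catalan_sum_one (q p : ℝ) (hq0 : 0 < q) (hq : q < 1 / 2) (hp : p = 1 - q) :
    HasSum (fun n : ℕ => p * (p * q) ^ n * catalanC n) 1 := by
  have hp0 : 0 < p := by linarith
  have hx0 : 0 < p * q := by positivity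
  have hdisc : 1 - 4 * (p * q) = (p - q) ^ 2 := by rw [hp]; ring
  have hx : p * q < 1 / 4 := by nlinarith
  have hnorm : ‖p * q‖ < 1 / 4 := by rwa [Real.norm_of_nonneg hx0.le]
  have hsqrt : √(1 - 4 * (p * q)) = p - q := by
    rw [hdisc]
    exact Real.sqrt_sq (by linarith)
  have hsum := (summable_norm_catalan_mul_pow hnorm).of_norm.hasSum.mul_left p
  rw [tsum_catalan_mul_pow_eq hx0 hx, hsqrt,
    show p * ((1 - (p - q)) / (2 * (p * q))) = 1 by field_simp; linarith] at hsum
  have hterm : (fun n : ℕ ↦ p * (p * q) ^ n * catalanC n) =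
      fun n ↦ p * ((catalan n : ℝ) * (p * q) ^ n) := by
    ext n
    rw [catalanC_eq_catalan]
    ring
  rwa [hterm]
end

section
/- With the Bernoulli-sequence model, let τ = inf{k ≥ 1 : W_k = −1} be the first time the walk W reaches −1. Then for every integer n ≥ 0, μ(τ = 2n+1) = p·(pq)^n·C_n, where C_n = (2n)!/(n!·(n+1)!) is the n-th Catalan number. (Equivalently, the Equal-Fork Stubborn Mining cycle length L = (τ+1)/2 satisfies μ(L = n+1) = p·(pq)^n·C_n.) -/
open MeasureTheory ENNReal
open scoped BigOperators Classical

/-- Blocks are labelled by `Bool`: `true` = `S` (selfish/attacker block),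
`false` = `H` (honest block). The walk `W k = #{i < k : X_i = S} - #{i < k : X_i = H}`. -/
def walkW (ω : ℕ → Bool) (k : ℕ) : ℤ :=
  (((Finset.range k).filter fun i => ω i = true).card : ℤ) -
    (((Finset.range k).filter fun i => ω i = false).card : ℤ)

/-- The first hitting time `τ = inf {k ≥ 1 : W_k = -1}` of level `-1` by the walk,
with `τ = ∞` if the walk never reaches `-1`. -/
noncomputable def tauEF (ω : ℕ → Bool) : ℕ∞ :=
  if _h : {k : ℕ | 1 ≤ k ∧ walkW ω k = -1}.Nonempty then
    ((sInf {k : ℕ | 1 ≤ k ∧ walkW ω k = -1} : ℕ) : ℕ∞)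
  else ⊤

open DyckStep

lemma walkW_zero (ω : ℕ → Bool) : walkW ω 0 = 0 := by simp [walkW]

lemma walkW_succ (ω : ℕ → Bool) (k : ℕ) :
    walkW ω (k + 1) = walkW ω k + (if ω k then 1 else -1) := by
  cases h : ω k <;>
    simp [walkW, Finset.range_add_one, Finset.filter_insert, h,
      Finset.card_insert_of_notMem, Finset.mem_filter] <;> ring

lemma walkW_congr {ω ω' : ℕ → Bool} {k : ℕ} (h : ∀ i < k, ω i = ω' i) :
    walkW ω k = walkW ω' k := by
  have h1 : (Finset.range k).filter (fun i => ω i = true)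
      = (Finset.range k).filter (fun i => ω' i = true) :=
    Finset.filter_congr (fun x hx => by simp [h x (Finset.mem_range.mp hx)])
  have h2 : (Finset.range k).filter (fun i => ω i = false)
      = (Finset.range k).filter (fun i => ω' i = false) :=
    Finset.filter_congr (fun x hx => by simp [h x (Finset.mem_range.mp hx)])
  unfold walkW
  rw [h1, h2]

lemma countU_map_range (ω : ℕ → Bool) (k : ℕ) :
    ((List.range k).map (fun i => bif ω i then U else D)).count U
      = ((Finset.range k).filter fun i => ω i = true).card := by
  induction k with
  | zero => simp
  | succ k ih =>
    rw [List.range_succ, Finset.range_add_one]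
    cases h : ω k <;>
      simp [List.count_append, Finset.filter_insert, h, ih, List.count_cons, List.count_nil]

lemma countD_map_range (ω : ℕ → Bool) (k : ℕ) :
    ((List.range k).map (fun i => bif ω i then U else D)).count D
      = ((Finset.range k).filter fun i => ω i = false).card := by
  induction k with
  | zero => simp
  | succ k ih =>
    rw [List.range_succ, Finset.range_add_one]
    cases h : ω k <;>
      simp [List.count_append, Finset.filter_insert, h, ih, List.count_cons, List.count_nil]


lemma tauEF_eq_iff (ω : ℕ → Bool) (N : ℕ) (hN : 1 ≤ N) :
    tauEF ω = (N : ℕ∞) ↔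
      (walkW ω N = -1 ∧ ∀ k, 1 ≤ k → k < N → walkW ω k ≠ -1) := by
  constructor
  · intro h
    unfold tauEF at h
    split_ifs at h with hne
    · have hs : sInf {k : ℕ | 1 ≤ k ∧ walkW ω k = -1} = N := by exact_mod_cast h
      have hmem := Nat.sInf_mem hne
      rw [hs] at hmem
      refine ⟨hmem.2, fun k hk1 hkN hw => ?_⟩
      have h3 : sInf {k : ℕ | 1 ≤ k ∧ walkW ω k = -1} ≤ k :=
        Nat.sInf_le ⟨hk1, hw⟩
      omega
    · exact absurd h (by simp)
  · rintro ⟨h1, h2⟩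
    have hne : {k : ℕ | 1 ≤ k ∧ walkW ω k = -1}.Nonempty := ⟨N, hN, h1⟩
    have hmem := Nat.sInf_mem hne
    have hle : sInf {k : ℕ | 1 ≤ k ∧ walkW ω k = -1} ≤ N := Nat.sInf_le ⟨hN, h1⟩
    have hs : sInf {k : ℕ | 1 ≤ k ∧ walkW ω k = -1} = N := by
      rcases lt_or_eq_of_le hle with h | h
      · exact absurd hmem.2 (h2 _ hmem.1 h)
      · exact h
    simp [tauEF, hne, hs]

lemma walkW_nonneg (ω : ℕ → Bool) (m : ℕ)
    (h : ∀ k, 1 ≤ k → k ≤ m → walkW ω k ≠ -1) :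
    ∀ k ≤ m, 0 ≤ walkW ω k := by
  intro k hk
  induction k with
  | zero => simp [walkW_zero]
  | succ k ih =>
    have h0 := ih (Nat.le_of_succ_le hk)
    have hst := walkW_succ ω k
    have h1 := h (k + 1) (by omega) hk
    split_ifs at hst <;> omega

section Words
variable (n : ℕ)

def extW {N : ℕ} (w : Fin N → Bool) : ℕ → Bool :=
  fun i => if h : i < N then w ⟨i, h⟩ else false

def goodWord (w : Fin (2 * n + 1) → Bool) : Prop :=
  walkW (extW w) (2 * n + 1) = -1 ∧
    ∀ k, 1 ≤ k → k < 2 * n + 1 → walkW (extW w) k ≠ -1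

variable {n}

lemma cardTF (ω : ℕ → Bool) (k : ℕ) :
    ((Finset.range k).filter fun i => ω i = true).card +
      ((Finset.range k).filter fun i => ω i = false).card = k := by
  rw [show (Finset.range k).filter (fun i => ω i = false)
      = (Finset.range k).filter (fun i => ¬ (ω i = true)) from
    Finset.filter_congr (fun x _ => by simp)]
  rw [Finset.card_filter_add_card_filter_not, Finset.card_range]

lemma good_nonneg {w : Fin (2 * n + 1) → Bool} (hw : goodWord n w) :
    ∀ k ≤ 2 * n, 0 ≤ walkW (extW w) k :=
  walkW_nonneg _ _ (fun k hk1 hk2 => hw.2 k hk1 (by omega))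

lemma good_last {w : Fin (2 * n + 1) → Bool} (hw : goodWord n w) :
    extW w (2 * n) = false ∧ walkW (extW w) (2 * n) = 0 := by
  have h1 := hw.1
  have h2 := walkW_succ (extW w) (2 * n)
  have h3 := good_nonneg hw (2 * n) le_rfl
  cases h : extW w (2 * n) with
  | true => rw [h] at h2; simp only [if_true] at h2; exfalso; omega
  | false => rw [h] at h2; simp only [if_false, Bool.false_eq_true] at h2; exact ⟨rfl, by omega⟩

lemma good_cT {w : Fin (2 * n + 1) → Bool} (hw : goodWord n w) :
    ((Finset.range (2 * n)).filter fun i => extW w i = true).card = n ∧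
    ((Finset.range (2 * n)).filter fun i => extW w i = false).card = n := by
  have h1 := (good_last hw).2
  have h2 := cardTF (extW w) (2 * n)
  unfold walkW at h1
  omega

def dyckOf (w : Fin (2 * n + 1) → Bool) (hw : goodWord n w) : DyckWord where
  toList := (List.range (2 * n)).map (fun i => bif extW w i then U else D)
  count_U_eq_count_D := by
    rw [countU_map_range, countD_map_range, (good_cT hw).1, (good_cT hw).2]
  count_D_le_count_U := by
    intro i
    have hrw : ((List.range (2 * n)).map (fun i => bif extW w i then U else D)).take i
        = (List.range (min i (2 * n))).map (fun i => bif extW w i then U else D) := by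
      rw [← List.map_take, List.take_range]
    rw [hrw, countU_map_range, countD_map_range]
    have h1 := good_nonneg hw (min i (2 * n)) (min_le_right _ _)
    unfold walkW at h1
    omega

lemma dyckOf_semilength {w : Fin (2 * n + 1) → Bool} (hw : goodWord n w) :
    (dyckOf w hw).semilength = n := by
  have h := (dyckOf w hw).two_mul_semilength_eq_length
  have hl : (dyckOf w hw).toList.length = 2 * n := by simp [dyckOf]
  omega

def wOf (n : ℕ) (d : DyckWord) : Fin (2 * n + 1) → Bool :=
  fun i => d.toList.getD i D == U

lemma wOf_rep {d : DyckWord} (hd : d.toList.length = 2 * n) :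
    (List.range (2 * n)).map (fun i => bif extW (wOf n d) i then U else D)
      = d.toList := by
  apply List.ext_getElem (by simp [hd])
  intro i h1 h2
  simp only [List.getElem_map, List.getElem_range]
  have hi : i < 2 * n := by simpa using h1
  have he : extW (wOf n d) i = (d.toList[i] == U) := by
    rw [extW, dif_pos (show i < 2 * n + 1 by omega), wOf]
    congr 1
    exact List.getD_eq_getElem d.toList D h2
  rw [he]
  rcases (d.toList[i]).dichotomy with h | h <;> rw [h] <;> rfl

lemma wOf_good {d : DyckWord} (hd : d.semilength = n) : goodWord n (wOf n d) := by
  have hlen : d.toList.length = 2 * n := by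
    have := d.two_mul_semilength_eq_length; omega
  have hrep := wOf_rep (n := n) hlen
  set g : ℕ → DyckStep := fun i => bif extW (wOf n d) i then U else D with hg
  -- walk values at k ≤ 2*n
  have hwalk : ∀ k ≤ 2 * n, 0 ≤ walkW (extW (wOf n d)) k := by
    intro k hk
    have htake : (List.range k).map g = d.toList.take k := by
      rw [← hrep, ← List.map_take, List.take_range, min_eq_left hk]
    have hU := countU_map_range (extW (wOf n d)) k
    have hD := countD_map_range (extW (wOf n d)) k
    rw [← hg, htake] at hU hD
    have hle := d.count_D_le_count_U k
    unfold walkW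
    omega
  have hzero : walkW (extW (wOf n d)) (2 * n) = 0 := by
    have hU := countU_map_range (extW (wOf n d)) (2 * n)
    have hD := countD_map_range (extW (wOf n d)) (2 * n)
    rw [← hg, hrep] at hU hD
    have := d.count_U_eq_count_D
    unfold walkW
    omega
  have hlast : extW (wOf n d) (2 * n) = false := by
    rw [extW, dif_pos (show 2 * n < 2 * n + 1 by omega), wOf]
    rw [List.getD_eq_default _ _ (by simp [hlen])]
    rfl
  constructor
  · rw [walkW_succ, hlast, hzero]; simp
  · intro k hk1 hk2
    have := hwalk k (by omega)
    omega

lemma wOf_dyckOf {w : Fin (2 * n + 1) → Bool} (hw : goodWord n w) :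
    wOf n (dyckOf w hw) = w := by
  funext i
  rw [wOf]
  show (((List.range (2 * n)).map (fun i => bif extW w i then U else D)).getD i D == U) = w i
  rcases lt_or_ge (i : ℕ) (2 * n) with hi | hi
  · rw [List.getD_eq_getElem _ _ (by simpa using hi)]
    simp only [List.getElem_map, List.getElem_range]
    have he : extW w i = w i := by simp [extW, i.isLt]
    rw [he]
    cases w i <;> rfl
  · have hlt := i.isLt
    have hi2 : (i : ℕ) = 2 * n := by omega
    rw [List.getD_eq_default _ _ (by simpa using hi)]
    have h1 := (good_last hw).1
    rw [extW, dif_pos (show 2 * n < 2 * n + 1 by omega)] at h1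
    have : i = ⟨2 * n, by omega⟩ := Fin.ext hi2
    rw [this, h1]
    rfl

lemma dyckOf_wOf {d : DyckWord} (hd : d.semilength = n) :
    dyckOf (wOf n d) (wOf_good hd) = d := by
  have hlen : d.toList.length = 2 * n := by
    have := d.two_mul_semilength_eq_length; omega
  exact DyckWord.ext (wOf_rep hlen)

lemma card_good (n : ℕ) :
    (Finset.univ.filter fun w : Fin (2 * n + 1) → Bool => goodWord n w).card
      = catalan n := by
  rw [← DyckWord.card_dyckWord_semilength_eq_catalan, ← Finset.card_univ]
  refine Finset.card_bij'
    (fun w hw => (⟨dyckOf w (Finset.mem_filter.mp hw).2,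
      dyckOf_semilength (Finset.mem_filter.mp hw).2⟩ : {d : DyckWord // d.semilength = n}))
    (fun d _ => wOf n d.1)
    (fun a ha => Finset.mem_univ _)
    (fun d _ => Finset.mem_filter.mpr ⟨Finset.mem_univ _, wOf_good d.2⟩)
    (fun a ha => wOf_dyckOf ((Finset.mem_filter.mp ha).2))
    (fun d _ => Subtype.ext (dyckOf_wOf d.2))

end Words

lemma catalanC_eq (n : ℕ) : catalanC n = (catalan n : ℝ) := by
  have h2 : (2 * n).choose n * n.factorial * n.factorial = (2 * n).factorial := by
    have h := Nat.choose_mul_factorial_mul_factorial (show n ≤ 2 * n by omega)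
    rwa [show 2 * n - n = n by omega] at h
  have h1 : (n + 1) * catalan n = (2 * n).choose n := by
    have h := succ_mul_catalan_eq_centralBinom n
    rwa [Nat.centralBinom] at h
  have key : catalan n * (n.factorial * (n + 1).factorial) = (2 * n).factorial := by
    rw [Nat.factorial_succ]
    calc catalan n * (n.factorial * ((n + 1) * n.factorial))
        = ((n + 1) * catalan n) * n.factorial * n.factorial := by ring
      _ = (2 * n).choose n * n.factorial * n.factorial := by rw [h1]
      _ = (2 * n).factorial := h2
  rw [catalanC, div_eq_iff (by positivity)]
  exact_mod_cast key.symm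

lemma card_filter_fin {N : ℕ} (w : Fin N → Bool) (b : Bool) :
    ((Finset.univ : Finset (Fin N)).filter fun i => w i = b).card
      = ((Finset.range N).filter fun i => extW w i = b).card := by
  rw [Finset.card_filter, Finset.card_filter, ← Fin.sum_univ_eq_sum_range
    (fun i => if extW w i = b then 1 else 0) N]
  refine Finset.sum_congr rfl fun i _ => ?_
  simp [extW, i.isLt]

lemma good_counts {n : ℕ} {w : Fin (2 * n + 1) → Bool} (hw : goodWord n w) :
    ((Finset.univ : Finset (Fin (2 * n + 1))).filter fun i => w i = true).card = n ∧
    ((Finset.univ : Finset (Fin (2 * n + 1))).filter fun i => w i = false).card = n + 1 := by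
  have hlast := (good_last hw).1
  have hT := (good_cT hw).1
  have hF := (good_cT hw).2
  have hsT : ((Finset.range (2 * n + 1)).filter fun i => extW w i = true).card = n := by
    rw [Finset.range_add_one, Finset.filter_insert, if_neg (by simp [hlast]),
      hT]
  have hsF : ((Finset.range (2 * n + 1)).filter fun i => extW w i = false).card = n + 1 := by
    rw [Finset.range_add_one, Finset.filter_insert, if_pos (by simp [hlast]),
      Finset.card_insert_of_notMem (by simp), hF]
  rw [card_filter_fin, card_filter_fin, hsT, hsF]
  exact ⟨rfl, rfl⟩


/-- Distribution of the Equal-Fork Stubborn Mining cycle: for every `n ≥ 0`,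
`μ(τ = 2n+1) = p (pq)^n C_n` (equivalently, the cycle length `L = (τ+1)/2`
satisfies `μ(L = n+1) = p (pq)^n C_n`). -/
theorem tauEF_distribution (q p : ℝ) (hq0 : 0 < q) (hq : q < 1 / 2) (hp : p = 1 - q)
    (μ : Measure (ℕ → Bool)) [IsProbabilityMeasure μ]
    (hμ : ∀ (n : ℕ) (w : Fin n → Bool),
      μ {ω | ∀ i : Fin n, ω i = w i} =
        ∏ i : Fin n, (if w i then ENNReal.ofReal q else ENNReal.ofReal p)) :
    ∀ n : ℕ, μ {ω | tauEF ω = ((2 * n + 1 : ℕ) : ℕ∞)} =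
      ENNReal.ofReal (p * (p * q) ^ n * catalanC n) := by
  intro n
  have hp0 : 0 ≤ p := by rw [hp]; linarith
  have hq0' : 0 ≤ q := le_of_lt hq0
  set S : Finset (Fin (2 * n + 1) → Bool) :=
    Finset.univ.filter (fun w => goodWord n w) with hS
  set Cyl : (Fin (2 * n + 1) → Bool) → Set (ℕ → Bool) :=
    fun w => {ω | ∀ i : Fin (2 * n + 1), ω i = w i} with hCyl
  -- event decomposition
  have hevent : {ω : ℕ → Bool | tauEF ω = ((2 * n + 1 : ℕ) : ℕ∞)}
      = ⋃ w ∈ S, Cyl w := by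
    ext ω
    simp only [Set.mem_setOf_eq, Set.mem_iUnion, hS, hCyl, Finset.mem_filter,
      Finset.mem_univ, true_and, exists_prop]
    constructor
    · intro h
      refine ⟨fun i => ω i, ?_, fun i => rfl⟩
      have hagree : ∀ i < 2 * n + 1, extW (fun i : Fin (2 * n + 1) => ω i) i = ω i := by
        intro i hi; simp [extW, hi]
      rw [tauEF_eq_iff _ _ (by omega)] at h
      refine ⟨?_, fun k hk1 hk2 => ?_⟩
      · rw [walkW_congr (fun i hi => hagree i (by omega))]; exact h.1
      · rw [walkW_congr (fun i hi => hagree i (by omega))]; exact h.2 k hk1 hk2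
    · rintro ⟨w, hw, hmem⟩
      have hagree : ∀ i < 2 * n + 1, extW w i = ω i := by
        intro i hi
        rw [extW, dif_pos hi]
        exact (hmem ⟨i, hi⟩).symm
      rw [tauEF_eq_iff _ _ (by omega)]
      refine ⟨?_, fun k hk1 hk2 => ?_⟩
      · rw [← walkW_congr (fun i hi => hagree i (by omega))]; exact hw.1
      · rw [← walkW_congr (fun i hi => hagree i (by omega))]; exact hw.2 k hk1 hk2
  rw [hevent, measure_biUnion_finset ?disj ?meas]
  case disj =>
    intro w _ w' _ hne
    refine Set.disjoint_left.mpr fun ω h1 h2 => hne ?_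
    exact funext fun i => (h1 i).symm.trans (h2 i)
  case meas =>
    intro w _
    have : Cyl w = ⋂ i : Fin (2 * n + 1), (fun ω : ℕ → Bool => ω i) ⁻¹' {w i} := by
      ext ω; simp [hCyl]
    rw [this]
    exact MeasurableSet.iInter fun i =>
      (measurable_pi_apply (i : ℕ)) (measurableSet_singleton _)
  -- each cylinder has the same measure
  have hcyl : ∀ w ∈ S, μ (Cyl w)
      = ENNReal.ofReal q ^ n * ENNReal.ofReal p ^ (n + 1) := by
    intro w hw
    have hgood : goodWord n w := (Finset.mem_filter.mp hw).2
    rw [hCyl]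
    rw [hμ (2 * n + 1) w]
    rw [Finset.prod_ite _ _]
    rw [Finset.prod_const, Finset.prod_const]
    rw [show Finset.filter (fun i => ¬ (w i = true)) Finset.univ
        = Finset.filter (fun i => w i = false) Finset.univ from
      Finset.filter_congr (fun x _ => by simp)]
    rw [(good_counts hgood).1, (good_counts hgood).2]
  rw [Finset.sum_congr rfl hcyl, Finset.sum_const]
  have hcard : S.card = catalan n := card_good n
  rw [hcard, nsmul_eq_mul]
  rw [← ENNReal.ofReal_pow hq0', ← ENNReal.ofReal_pow hp0,
    ← ENNReal.ofReal_natCast, ← ENNReal.ofReal_mul (by positivity),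
    ← ENNReal.ofReal_mul (by positivity)]
  congr 1
  rw [catalanC_eq]
  ring
end

section
/- Let q be real with 0 < q < 1/2, p = 1 − q, and γ ∈ (0,1]. Then ( ∑_{n=0}^∞ p·(pq)^n·C_n·( n + 1 − (1 − (1−γ)^{n+1})/γ ) ) / ( p/(p − q) ) = q/p − ((1 − γ)(p − q))/(γp)·( 1 − p·Ĉ((1−γ)pq) ). Here the numerator is the expected number E[Z] of attacker blocks in the official chain per Equal-Fork Stubborn Mining cycle (since E[Z | L = n+1] = n + 1 − (1 − (1−γ)^{n+1})/γ) and p/(p−q) is E[L], so this is the long-term apparent hashrate of the Equal-Fork Stubborn miner. -/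
open scoped BigOperators

/-- The value of the Catalan generating series: `Ĉ(x) = (1 - √(1 - 4x)) / (2x)` for
`x ≠ 0` and `Ĉ(0) = 1`. -/
noncomputable def catalanGF (x : ℝ) : ℝ :=
  if x = 0 then 1 else (1 - Real.sqrt (1 - 4 * x)) / (2 * x)

/-!
Both series are binomial series in `-4x`: since `(n + 1) C_n = binom(2n, n)`, the numbers
`binom(2n, n)` are the coefficients of `(1 - 4x)^(-1/2)`, and `-2 C_n` is the coefficient of
`x^(n+1)` in `(1 - 4x)^(1/2)`; this gives `∑ C_n x^n = Ĉ(x)` for `|x| < 1/4`. At `x = pq` one has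
`√(1 - 4pq) = p - q`, so `E[Z]` splits as `p/(p-q) - 1/γ + p(1-γ)/γ · Ĉ((1-γ)pq)`.
-/

theorem Real.hasSum_choose_mul_pow (a : ℝ) {y : ℝ} (hy : |y| < 1) :
    HasSum (fun n => Ring.choose a n * y ^ n) ((1 + y) ^ a) := by
  have h := Real.one_add_rpow_hasFPowerSeriesOnBall_zero (a := a) |>.hasSum (y := y) (by
    simpa [Metric.eball, edist_dist] using hy)
  simp only [binomialSeries, FormalMultilinearSeries.ofScalars_apply_eq, zero_add, smul_eq_mul] at h
  exact h

theorem Ring.succ_mul_choose_succ {R : Type*} [CommRing R] [BinomialRing R] (a : R) (n : ℕ) :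
    (n + 1) * Ring.choose a (n + 1) = Ring.choose a n * (a - n) := by
  simpa using Ring.choose_smul_choose a (Nat.le_succ n)

theorem Ring.succ_mul_choose_add_one_succ {R : Type*} [CommRing R] [BinomialRing R] (a : R)
    (n : ℕ) : (n + 1) * Ring.choose (a + 1) (n + 1) = (a + 1) * Ring.choose a n := by
  simpa using Ring.choose_add_smul_choose a n 1

theorem succ_mul_catalanC (n : ℕ) : ((n : ℝ) + 1) * catalanC n = Nat.centralBinom n := by
  rw [catalanC, Nat.centralBinom_eq_two_mul_choose, Nat.cast_choose ℝ (by omega : n ≤ 2 * n),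
    show 2 * n - n = n by omega, Nat.factorial_succ]
  push_cast
  field_simp

theorem choose_neg_half_mul_neg_four_pow (n : ℕ) :
    Ring.choose (-1 / 2 : ℝ) n * (-4) ^ n = Nat.centralBinom n := by
  induction n with
  | zero => simp
  | succ n ih =>
    have hn : ((n : ℝ) + 1) ≠ 0 := by positivity
    apply mul_left_cancel₀ hn
    have hc : ((n : ℝ) + 1) * Nat.centralBinom (n + 1) = 2 * (2 * n + 1) * Nat.centralBinom n := by
      exact_mod_cast Nat.succ_mul_centralBinom_succ n
    rw [hc, ← ih, ← mul_assoc, Ring.succ_mul_choose_succ]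
    ring

theorem choose_half_succ_mul_neg_four_pow (n : ℕ) :
    Ring.choose (1 / 2 : ℝ) (n + 1) * (-4) ^ (n + 1) = -2 * catalanC n := by
  have hn : ((n : ℝ) + 1) ≠ 0 := by positivity
  apply mul_left_cancel₀ hn
  have h := Ring.succ_mul_choose_add_one_succ (-1 / 2 : ℝ) n
  rw [show (-1 / 2 : ℝ) + 1 = 1 / 2 by norm_num] at h
  rw [← mul_assoc, h, mul_left_comm, succ_mul_catalanC, ← choose_neg_half_mul_neg_four_pow]
  ring

theorem hasSum_centralBinom_mul_pow {x : ℝ} (hx : |x| < 1 / 4) :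
    HasSum (fun n => (Nat.centralBinom n : ℝ) * x ^ n) (√(1 - 4 * x))⁻¹ := by
  have h := Real.hasSum_choose_mul_pow (-1 / 2) (y := -4 * x) (by rw [abs_mul]; norm_num; linarith)
  have hv : (1 + -4 * x) ^ (-1 / 2 : ℝ) = (√(1 - 4 * x))⁻¹ := by
    rw [neg_div, Real.rpow_neg (by linarith [le_abs_self x]), Real.sqrt_eq_rpow]
    ring_nf
  simp_rw [hv, mul_pow, ← mul_assoc, choose_neg_half_mul_neg_four_pow] at h
  exact h

theorem hasSum_catalanC_mul_pow_succ {x : ℝ} (hx : |x| < 1 / 4) :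
    HasSum (fun n => catalanC n * x ^ (n + 1)) ((1 - √(1 - 4 * x)) / 2) := by
  have h := Real.hasSum_choose_mul_pow (1 / 2) (y := -4 * x) (by rw [abs_mul]; norm_num; linarith)
  rw [← hasSum_nat_add_iff' 1] at h
  simp only [mul_pow, ← mul_assoc, choose_half_succ_mul_neg_four_pow, Finset.sum_range_one,
    Ring.choose_zero_right, pow_zero, mul_one, ← Real.sqrt_eq_rpow] at h
  rw [show (1 - √(1 - 4 * x)) / 2 = (√(1 + -4 * x) - 1) / -2 by ring_nf]
  exact (h.div_const (-2)).congr_fun fun n => by ring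

theorem hasSum_catalanC_mul_pow {x : ℝ} (hx : |x| < 1 / 4) :
    HasSum (fun n => catalanC n * x ^ n) (catalanGF x) := by
  rcases eq_or_ne x 0 with rfl | hx0
  · refine (hasSum_ite_eq 0 (catalanGF 0)).congr_fun fun n => ?_
    rcases n with _ | n <;> simp [catalanGF, catalanC]
  rw [catalanGF, if_neg hx0, ← div_div]
  exact ((hasSum_catalanC_mul_pow_succ hx).div_const x).congr_fun fun n => by field_simp; ring

/-- The long-term apparent hashrate of the Equal-Fork Stubborn miner:
`E[Z] / E[L] = q/p - ((1-γ)(p-q))/(γp) · (1 - p Ĉ((1-γ) pq))`, where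
`E[Z] = ∑ₙ p (pq)^n C_n (n + 1 - (1 - (1-γ)^(n+1))/γ)` and `E[L] = p/(p-q)`. -/
theorem efsm_apparent_hashrate (q p γ : ℝ) (hq0 : 0 < q) (hq : q < 1 / 2)
    (hp : p = 1 - q) (hγ0 : 0 < γ) (hγ1 : γ ≤ 1) :
    (∑' n : ℕ, p * (p * q) ^ n * catalanC n *
        ((n : ℝ) + 1 - (1 - (1 - γ) ^ (n + 1)) / γ)) / (p / (p - q)) =
      q / p - (1 - γ) * (p - q) / (γ * p) * (1 - p * catalanGF ((1 - γ) * p * q)) := by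
  have hp0 : 0 < p := by linarith
  have hpq : 0 < p - q := by linarith
  have hx : |p * q| < 1 / 4 := by rw [abs_of_pos (by positivity), hp]; nlinarith
  have hw : |(1 - γ) * p * q| < 1 / 4 := by
    rw [mul_assoc, abs_mul, abs_of_nonneg (by linarith : 0 ≤ 1 - γ)]
    nlinarith [abs_nonneg (p * q)]
  have hsqrt : √(1 - 4 * (p * q)) = p - q := by
    rw [show 1 - 4 * (p * q) = (p - q) ^ 2 by rw [hp]; ring, Real.sqrt_sq hpq.le]
  have hB := hasSum_centralBinom_mul_pow hx
  have hC := hasSum_catalanC_mul_pow hx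
  rw [hsqrt] at hB
  rw [catalanGF, if_neg (by positivity), hsqrt,
    show (1 - (p - q)) / (2 * (p * q)) = p⁻¹ by rw [hp]; field_simp; ring] at hC
  have hZ := ((hB.mul_left p).sub (hC.mul_left (p / γ))).add
    ((hasSum_catalanC_mul_pow hw).mul_left (p * (1 - γ) / γ))
  rw [(hZ.congr_fun fun n => ?_).tsum_eq]
  · field_simp
    ring
  · rw [← succ_mul_catalanC, show (1 - γ) * p * q = (1 - γ) * (p * q) by ring]
    simp only [mul_pow]
    field_simp
    ring
end
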